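/- Let ν : ℝ^q → ℝ be a polynomial and ν̂_s its Cut-HDMR approximation with anchor 0. If B = (B_1,...,B_q) has independent standard normal components, then E[ν̂_s(B)] = ∑_{α : |supp α| ≤ s} c_α ∏_{k ∈ supp α} E[B_k^{α_k}], i.e., the DRM approximation of the Gaussian integral of ν equals the Gaussian integral of the ≤ s-interaction part of ν; in particular, if all monomials of ν have interaction order ≤ s, then E[ν̂_s(B)] = E[ν(B)] exactly. -/

import Mathlib

open Finset MeasureTheory Real

/-- For a function `f : ℝ^q → ℝ` and a subset `S ⊆ {1,...,q}`, `cutComponent f S b` is `f`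
evaluated at the vector whose coordinates in `S` equal those of `b` and whose remaining
coordinates are `0`. -/
noncomputable def cutComponent {q : ℕ} (f : (Fin q → ℝ) → ℝ) (S : Finset (Fin q))
    (b : Fin q → ℝ) : ℝ :=
  f fun k => if k ∈ S then b k else 0

/-- The `s`-variate Cut-HDMR approximation (anchored at `0`) of `f : ℝ^q → ℝ`. -/
noncomputable def cutHDMR {q : ℕ} (s : ℕ) (f : (Fin q → ℝ) → ℝ) (b : Fin q → ℝ) : ℝ :=
  ∑ i ∈ Finset.range (s + 1),
    (-1 : ℝ) ^ (s - i) * (Nat.choose (q - i - 1) (s - i)) *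
      ∑ S ∈ (Finset.univ : Finset (Fin q)).powersetCard i, cutComponent f S b

/-- The standard Gaussian density on `ℝ^q` with independent standard normal components. -/
noncomputable def stdGaussDensity {q : ℕ} (b : Fin q → ℝ) : ℝ :=
  ∏ k, (Real.sqrt (2 * Real.pi))⁻¹ * Real.exp (-(b k) ^ 2 / 2)

/-!
Restricting a monomial `x ^ α` to the coordinates in `S` keeps it when `α.support ⊆ S` and kills
it otherwise. Hence, by linearity, a monomial whose support `T` has `t` elements enters the
Cut-HDMR approximation `ν̂_s` with weight
`∑_{t ≤ i ≤ s} (-1) ^ (s - i) * C(q - i - 1, s - i) * C(q - t, i - t)`,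
the second binomial counting the `i`-sets containing `T`. By Chu–Vandermonde this weight is `1`
for `t ≤ s`, and it is `0` for `t > s` (empty sum), so `ν̂_s` is exactly the `≤ s`-interaction part
of `ν`. Against the product Gaussian density each monomial then factorizes into one-dimensional
moments.
-/

open ProbabilityTheory
open scoped NNReal

theorem sum_range_neg_one_pow_mul_choose_mul_choose {t m : ℕ} (h : t < m) :
    ∑ k ∈ range (t + 1), (-1 : ℤ) ^ (t - k) * ((m - 1 - k).choose (t - k) : ℤ) * m.choose k =
      1 := by
  have hV := Ring.add_choose_eq (r := (m : ℤ)) (s := (t : ℤ) - m) t (Commute.all _ _)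
  rw [add_sub_cancel, Ring.choose_natCast, Nat.choose_self, Nat.cast_one,
    Nat.sum_antidiagonal_eq_sum_range_succ_mk] at hV
  refine (sum_congr rfl fun k hk => ?_).trans hV.symm
  have hk : k ≤ t := Nat.lt_succ_iff.mp (mem_range.mp hk)
  -- Chu–Vandermonde for `m + (t - m)`, then upper negation:
  -- `choose (t - m) (t - k) = (-1) ^ (t - k) * choose (m - 1 - k) (t - k)`.
  have hneg : (t : ℤ) - m = -((m - t - 1 : ℕ) + 1 : ℤ) := by omega
  have hupper : ((m - t - 1 : ℕ) + 1 : ℤ) + ((t - k : ℕ) : ℤ) - 1 = ((m - 1 - k : ℕ) : ℤ) := by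
    omega
  rw [Ring.choose_natCast, hneg, Ring.choose_neg, hupper, Ring.choose_natCast,
    Units.smul_def, Int.coe_negOnePow_natCast, smul_eq_mul]
  ring

theorem sum_cutHDMR_coeff_mul_card_superset {ι : Type*} [Fintype ι] [DecidableEq ι] {s : ℕ}
    (hs : s < Fintype.card ι) (T : Finset ι) :
    ∑ i ∈ range (s + 1), (-1 : ℝ) ^ (s - i) * (Nat.choose (Fintype.card ι - i - 1) (s - i)) *
        #{S ∈ (univ : Finset ι).powersetCard i | T ⊆ S} =
      if #T ≤ s then 1 else 0 := by
  have hcard : ∀ i, #{S ∈ (univ : Finset ι).powersetCard i | T ⊆ S} =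
      if #T ≤ i then (Fintype.card ι - #T).choose (i - #T) else 0 := by
    intro i
    split_ifs with hi
    · exact card_filter_powersetCard_subset T univ i (subset_univ T) hi
    · exact card_eq_zero.2 <| filter_eq_empty_iff.2 fun S hS hTS =>
        hi ((card_le_card hTS).trans (mem_powersetCard.1 hS).2.le)
  simp_rw [hcard]
  split_ifs with hT
  · obtain ⟨t, rfl⟩ := Nat.exists_eq_add_of_le hT
    rw [add_assoc, sum_range_add, sum_eq_zero fun i hi => by
      rw [if_neg (by have := mem_range.1 hi; omega)]; simp, zero_add]
    have hid := sum_range_neg_one_pow_mul_choose_mul_choose (show t < Fintype.card ι - #T by omega)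
    rw [← Int.cast_inj (α := ℝ)] at hid
    push_cast at hid
    refine (sum_congr rfl fun k hk => ?_).trans hid
    have hk : k ≤ t := Nat.lt_succ_iff.mp (mem_range.mp hk)
    rw [if_pos (by omega), show #T + t - (#T + k) = t - k by omega,
      show Fintype.card ι - (#T + k) - 1 = Fintype.card ι - #T - 1 - k by omega,
      show #T + k - #T = k by omega]
  · refine sum_eq_zero fun i hi => ?_
    rw [if_neg (by have := mem_range.1 hi; omega)]
    simp

theorem prod_pow_ite_mem {σ R : Type*} [Fintype σ] [DecidableEq σ] [CommMonoidWithZero R]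
    [NoZeroDivisors R]
    (α : σ →₀ ℕ) (S : Finset σ) (b : σ → R) :
    ∏ k, (if k ∈ S then b k else 0) ^ α k = if α.support ⊆ S then ∏ k, b k ^ α k else 0 := by
  split_ifs with h
  · refine prod_congr rfl fun k _ => ?_
    by_cases hk : k ∈ S
    · rw [if_pos hk]
    · rw [Finsupp.notMem_support_iff.1 (fun hα => hk (h hα)), pow_zero, pow_zero]
  · obtain ⟨k, hk, hkS⟩ := not_subset.1 h
    exact prod_eq_zero (mem_univ k) (by rw [if_neg hkS, zero_pow (Finsupp.mem_support_iff.1 hk)])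

theorem cutComponent_eval {q : ℕ} (ν : MvPolynomial (Fin q) ℝ) (S : Finset (Fin q))
    (b : Fin q → ℝ) :
    cutComponent (fun x => MvPolynomial.eval x ν) S b =
      ∑ α ∈ ν.support with α.support ⊆ S, ν.coeff α * ∏ k, b k ^ α k := by
  simp only [cutComponent, MvPolynomial.eval_eq', prod_pow_ite_mem, mul_ite, mul_zero, sum_filter]

theorem cutHDMR_eval {q s : ℕ} (hs : s < q) (ν : MvPolynomial (Fin q) ℝ) (b : Fin q → ℝ) :
    cutHDMR s (fun x => MvPolynomial.eval x ν) b =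
      ∑ α ∈ ν.support with #α.support ≤ s, ν.coeff α * ∏ k, b k ^ α k := by
  have hweight := fun T : Finset (Fin q) =>
    sum_cutHDMR_coeff_mul_card_superset (ι := Fin q) (s := s) (by simpa using hs) T
  simp only [Fintype.card_fin] at hweight
  have hswap : ∀ i, ∑ S ∈ (univ : Finset (Fin q)).powersetCard i,
      ∑ α ∈ ν.support with α.support ⊆ S, ν.coeff α * ∏ k, b k ^ α k =
      ∑ α ∈ ν.support, (#{S ∈ (univ : Finset (Fin q)).powersetCard i | α.support ⊆ S} : ℝ) *
        (ν.coeff α * ∏ k, b k ^ α k) := by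
    intro i
    simp only [sum_filter]
    rw [sum_comm]
    simp only [← sum_filter, sum_const, nsmul_eq_mul]
  simp only [cutHDMR, cutComponent_eval, hswap, mul_sum]
  rw [sum_comm, sum_filter]
  refine sum_congr rfl fun α _ => ?_
  simp_rw [← mul_assoc]
  rw [← sum_mul, ← sum_mul, hweight]
  split_ifs <;> simp

theorem gaussianPDFReal_zero_one (x : ℝ) :
    gaussianPDFReal 0 1 x = (Real.sqrt (2 * Real.pi))⁻¹ * Real.exp (-x ^ 2 / 2) := by
  simp [gaussianPDFReal]

theorem integrable_pow_mul_gaussianPDFReal (μ : ℝ) (v : ℝ≥0) (n : ℕ) :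
    Integrable fun x => x ^ n * gaussianPDFReal μ v x := by
  rcases eq_or_ne v 0 with rfl | hv
  · simp [gaussianPDFReal_zero_var]
  have h : Integrable (fun x : ℝ => x ^ n) (gaussianReal μ v) :=
    (integrable_norm_iff (by fun_prop)).1 <| by
      simpa using (memLp_id_gaussianReal (μ := μ) (v := v) n).integrable_norm_pow'
  rw [gaussianReal_of_var_ne_zero μ hv, integrable_withDensity_iff_integrable_smul'
    (measurable_gaussianPDF μ v) (.of_forall fun _ => gaussianPDF_lt_top)] at h
  simpa [toReal_gaussianPDF, mul_comm] using h

theorem prod_pow_mul_stdGaussDensity {q : ℕ} (α : Fin q → ℕ) (b : Fin q → ℝ) :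
    (∏ k, b k ^ α k) * stdGaussDensity b = ∏ k, b k ^ α k * gaussianPDFReal 0 1 (b k) := by
  simp only [stdGaussDensity, gaussianPDFReal_zero_one, prod_mul_distrib]

theorem integrable_prod_pow_mul_stdGaussDensity {q : ℕ} (α : Fin q → ℕ) :
    Integrable fun b : Fin q → ℝ => (∏ k, b k ^ α k) * stdGaussDensity b := by
  simp only [prod_pow_mul_stdGaussDensity]
  exact Integrable.fintype_prod fun k => integrable_pow_mul_gaussianPDFReal 0 1 (α k)

theorem integral_prod_pow_mul_stdGaussDensity {q : ℕ} (α : Fin q →₀ ℕ) :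
    ∫ b : Fin q → ℝ, (∏ k, b k ^ α k) * stdGaussDensity b =
      ∏ k ∈ α.support, ∫ x, x ^ α k * gaussianPDFReal 0 1 x := by
  simp only [prod_pow_mul_stdGaussDensity]
  rw [volume_pi, integral_fintype_prod_eq_prod (fun k x => x ^ α k * gaussianPDFReal 0 1 x)]
  refine (prod_subset (subset_univ _) fun k _ hk => ?_).symm
  rw [Finsupp.notMem_support_iff.1 hk]
  simpa using integral_gaussianPDFReal_eq_one 0 one_ne_zero

theorem integral_sum_monomial_mul_stdGaussDensity {q : ℕ} (A : Finset (Fin q →₀ ℕ))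
    (c : (Fin q →₀ ℕ) → ℝ) :
    ∫ b : Fin q → ℝ, (∑ α ∈ A, c α * ∏ k, b k ^ α k) * stdGaussDensity b =
      ∑ α ∈ A, c α * ∏ k ∈ α.support, ∫ x, x ^ α k * gaussianPDFReal 0 1 x := by
  simp only [sum_mul, mul_assoc]
  rw [integral_finsetSum A fun α _ => (integrable_prod_pow_mul_stdGaussDensity α).const_mul (c α)]
  simp only [integral_const_mul, integral_prod_pow_mul_stdGaussDensity]

/-- If `B` has independent standard normal components, then the Gaussian expectation of the
Cut-HDMR approximation `ν̂_s` of a polynomial `ν` equals the sum, over monomials of `ν` with at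
most `s` distinct variables, of the coefficient times the product of the Gaussian moments; in
particular, if all monomials of `ν` have interaction order `≤ s`, then
`E[ν̂_s(B)] = E[ν(B)]` exactly. -/
theorem cutHDMR_gaussian_expectation (q s : ℕ) (hs : s < q)
    (ν : MvPolynomial (Fin q) ℝ) :
    (∫ b : Fin q → ℝ, cutHDMR s (fun x => MvPolynomial.eval x ν) b * stdGaussDensity b) =
      ∑ α ∈ ν.support.filter (fun α => α.support.card ≤ s),
        ν.coeff α *
          ∏ k ∈ α.support,
            ∫ x : ℝ, x ^ α k * ((Real.sqrt (2 * Real.pi))⁻¹ * Real.exp (-x ^ 2 / 2)) ∧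
    ((∀ α ∈ ν.support, α.support.card ≤ s) →
      (∫ b : Fin q → ℝ, cutHDMR s (fun x => MvPolynomial.eval x ν) b * stdGaussDensity b) =
        ∫ b : Fin q → ℝ, MvPolynomial.eval b ν * stdGaussDensity b) := by
  simp only [cutHDMR_eval hs, ← gaussianPDFReal_zero_one]
  refine ⟨integral_sum_monomial_mul_stdGaussDensity _ _, fun hall => ?_⟩
  simp only [filter_true_of_mem hall, MvPolynomial.eval_eq']
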